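/- arXiv:1503.07134 — 8 statements merged into one kernel-verified Lean document; each statement's English description precedes it below -/
import Mathlib

section
/- Under the Cartan multiplication rules for the algebra A_n^m, if the indices u_s appearing in rule 3 are pairwise distinct for s = m+1,...,n, and the full associativity conditions (A1) and (A2) hold, then I_s I_p = 0 for all s,p ∈ [m+1,n]. -/
/-!
Since `I_s = I_{u_s} I_s`, (A2) gives `I_s I_p = I_{u_s} (I_s I_p)`. Now `I_s I_p` is a combination
of basis vectors `I_q` with `q > s`, and `I_{u_s}` kills each of them because `u_q ≠ u_s`.
-/

theorem mul_eq_zero_of_mem_span {R A : Type*} [Semiring R] [NonUnitalNonAssocSemiring A]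
    [Module R A] [SMulCommClass R A A] {a x : A} {S : Set A} (hS : ∀ y ∈ S, a * y = 0)
    (hx : x ∈ Submodule.span R S) : a * x = 0 :=
  (Submodule.span_le (p := LinearMap.ker (LinearMap.mulLeft R a))).mpr hS hx

theorem proposition2_general {n m : ℕ} (A : Type*) [NonUnitalNonAssocCommRing A]
    [Module ℂ A] [SMulCommClass ℂ A A]
    (I : Module.Basis (Fin n) ℂ A)
    (h2 : ∀ r s : Fin n, m ≤ (r : ℕ) → m ≤ (s : ℕ) →
      I r * I s ∈ Submodule.span ℂ {x : A | ∃ p : Fin n, max r s < p ∧ x = I p})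
    (u : Fin n → Fin n)
    (h3 : ∀ s : Fin n, m ≤ (s : ℕ) → (u s : ℕ) < m ∧ I (u s) * I s = I s ∧
      ∀ r : Fin n, (r : ℕ) < m → r ≠ u s → I r * I s = 0)
    (hdist : ∀ s p : Fin n, m ≤ (s : ℕ) → m ≤ (p : ℕ) → s ≠ p → u s ≠ u p)
    (hA2 : ∀ v s p : Fin n, (v : ℕ) < m → m ≤ (s : ℕ) → m ≤ (p : ℕ) →
      (I v * I s) * I p = I v * (I s * I p)) :
    ∀ s p : Fin n, m ≤ (s : ℕ) → m ≤ (p : ℕ) → I s * I p = 0 := by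
  intro s p hs hp
  obtain ⟨hus, hunit, -⟩ := h3 s hs
  have hkill : ∀ y ∈ {x : A | ∃ q : Fin n, max s p < q ∧ x = I q}, I (u s) * y = 0 := by
    rintro _ ⟨q, hq, rfl⟩
    have hsq : s < q := (le_max_left s p).trans_lt hq
    have hqm : m ≤ (q : ℕ) := hs.trans hsq.le
    exact (h3 q hqm).2.2 (u s) hus (hdist s q hs hqm hsq.ne)
  calc I s * I p = (I (u s) * I s) * I p := by rw [hunit]
    _ = I (u s) * (I s * I p) := hA2 (u s) s p hus hs hp
    _ = 0 := mul_eq_zero_of_mem_span hkill (h2 s p hs hp)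

/-- Under the Cartan multiplication rules, if the indices `u s` of
rule 3 are pairwise distinct and the associativity conditions (A1) and (A2)
hold, then the product of any two nilpotent basis vectors vanishes. -/
theorem proposition2 {n m : ℕ} (A : Type*) [NonUnitalNonAssocCommRing A]
    [Module ℂ A] [SMulCommClass ℂ A A] [IsScalarTower ℂ A A]
    (I : Module.Basis (Fin n) ℂ A)
    (h1 : ∀ r s : Fin n, (r : ℕ) < m → (s : ℕ) < m →
      I r * I s = if r = s then I r else 0)
    (h2 : ∀ r s : Fin n, m ≤ (r : ℕ) → m ≤ (s : ℕ) →
      I r * I s ∈ Submodule.span ℂ {x : A | ∃ p : Fin n, max r s < p ∧ x = I p})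
    (u : Fin n → Fin n)
    (h3 : ∀ s : Fin n, m ≤ (s : ℕ) → (u s : ℕ) < m ∧ I (u s) * I s = I s ∧
      ∀ r : Fin n, (r : ℕ) < m → r ≠ u s → I r * I s = 0)
    (hdist : ∀ s p : Fin n, m ≤ (s : ℕ) → m ≤ (p : ℕ) → s ≠ p → u s ≠ u p)
    (hA1 : ∀ r s p : Fin n, m ≤ (r : ℕ) → m ≤ (s : ℕ) → m ≤ (p : ℕ) →
      (I r * I s) * I p = I r * (I s * I p))
    (hA2 : ∀ v s p : Fin n, (v : ℕ) < m → m ≤ (s : ℕ) → m ≤ (p : ℕ) →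
      (I v * I s) * I p = I v * (I s * I p)) :
    ∀ s p : Fin n, m ≤ (s : ℕ) → m ≤ (p : ℕ) → I s * I p = 0 :=
  proposition2_general A I h2 u h3 hdist hA2
end

section
/- In the algebra A_n^m, for each u ∈ {1,...,m} the set 𝔍_u := { Σ_{r≠u} λ_r I_r : λ_r ∈ ℂ } is a maximal ideal of A_n^m. -/
/-!
The `u`-th coordinate functional `I.coord u` is a unital algebra homomorphism `A →ₐ[ℂ] ℂ`:
on the idempotents `I r` (`r < m`) it is the character picking out `I u`, and every product
`I r * I s` with `s ≥ m` lies in the span of the `I p` with `p ≥ m`, on which it vanishes.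
A surjective homomorphism onto a field has maximal kernel, and the kernel of `I.coord u`
is the span of the other basis vectors.
-/

open Module Submodule

theorem Module.Basis.coord_eq_zero_iff_mem_span {ι R M : Type*} [Semiring R] [AddCommMonoid M]
    [Module R M] (b : Basis ι R M) (u : ι) (x : M) :
    b.coord u x = 0 ↔ x ∈ span R {y | ∃ r, r ≠ u ∧ y = b r} := by
  have hset : {y | ∃ r, r ≠ u ∧ y = b r} = b '' {u}ᶜ := by
    ext y
    simp [eq_comm]
  rw [hset, b.mem_span_image, Set.subset_compl_singleton_iff, Finset.mem_coe,
    Finsupp.notMem_support_iff, b.coord_apply]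

theorem Module.Basis.map_mul_of_map_mul_basis {ι K A : Type*} [CommSemiring K] [Semiring A]
    [Algebra K A] (b : Basis ι K A) (f : A →ₗ[K] K)
    (h : ∀ i j, f (b i * b j) = f (b i) * f (b j)) (x y : A) :
    f (x * y) = f x * f y := by
  have key : (LinearMap.mul K A).compr₂ f = (LinearMap.mul K K).compl₁₂ f f :=
    LinearMap.ext_basis b b h
  exact LinearMap.congr_fun₂ key x y

section Cartan

variable {K A : Type*} [CommSemiring K] [CommSemiring A] [Algebra K A] {n m : ℕ}
  (I : Basis (Fin n) K A)

theorem mul_basis_mem_span_of_le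
    (h2 : ∀ r s : Fin n, m ≤ (r : ℕ) → m ≤ (s : ℕ) →
      I r * I s ∈ span K {x : A | ∃ p : Fin n, max r s < p ∧ x = I p})
    (uu : Fin n → Fin n)
    (h3 : ∀ s : Fin n, m ≤ (s : ℕ) → (uu s : ℕ) < m ∧ I (uu s) * I s = I s ∧
      ∀ r : Fin n, (r : ℕ) < m → r ≠ uu s → I r * I s = 0)
    (r : Fin n) {s : Fin n} (hs : m ≤ (s : ℕ)) :
    I r * I s ∈ span K {x : A | ∃ p : Fin n, m ≤ (p : ℕ) ∧ x = I p} := by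
  obtain ⟨-, hunit, hzero⟩ := h3 s hs
  by_cases hr : (r : ℕ) < m
  · by_cases hru : r = uu s
    · rw [hru, hunit]
      exact subset_span ⟨s, hs, rfl⟩
    · rw [hzero r hr hru]
      exact zero_mem _
  · refine span_mono ?_ (h2 r s (not_lt.mp hr) hs)
    rintro x ⟨p, hp, rfl⟩
    exact ⟨p, hs.trans (le_of_lt (lt_of_le_of_lt (le_max_right r s) hp)), rfl⟩

theorem coord_mul_basis
    (h1 : ∀ r s : Fin n, (r : ℕ) < m → (s : ℕ) < m →
      I r * I s = if r = s then I r else 0)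
    (h2 : ∀ r s : Fin n, m ≤ (r : ℕ) → m ≤ (s : ℕ) →
      I r * I s ∈ span K {x : A | ∃ p : Fin n, max r s < p ∧ x = I p})
    (uu : Fin n → Fin n)
    (h3 : ∀ s : Fin n, m ≤ (s : ℕ) → (uu s : ℕ) < m ∧ I (uu s) * I s = I s ∧
      ∀ r : Fin n, (r : ℕ) < m → r ≠ uu s → I r * I s = 0)
    {u : Fin n} (hu : (u : ℕ) < m) (r s : Fin n) :
    I.coord u (I r * I s) = I.coord u (I r) * I.coord u (I s) := by
  classical
  have coord_basis : ∀ p, I.coord u (I p) = if p = u then 1 else 0 := by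
    intro p
    simp [Finsupp.single_apply]
  -- the coordinate vanishes on `span {I p : p ≥ m}`, which contains `I r * I s` as soon as `s ≥ m`
  have vanish : ∀ {r s : Fin n}, m ≤ (s : ℕ) →
      I.coord u (I r * I s) = I.coord u (I r) * I.coord u (I s) := by
    intro r s hs
    have hsu : s ≠ u := fun h => (h ▸ hs).not_gt hu
    rw [coord_basis s, if_neg hsu, mul_zero, I.coord_eq_zero_iff_mem_span]
    refine span_mono ?_ (mul_basis_mem_span_of_le I h2 uu h3 r hs)
    rintro x ⟨p, hp, rfl⟩
    exact ⟨p, fun h => (h ▸ hp).not_gt hu, rfl⟩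
  by_cases hs : (s : ℕ) < m
  · by_cases hr : (r : ℕ) < m
    · by_cases hrs : r = s
      · subst hrs
        rw [h1 r r hr hr, if_pos rfl, coord_basis]
        split_ifs <;> simp
      · rw [h1 r s hr hs, if_neg hrs, map_zero, coord_basis, coord_basis]
        split_ifs with hur hus
        · exact absurd (hur.trans hus.symm) hrs
        all_goals simp
    · rw [mul_comm, vanish (not_lt.mp hr), mul_comm]
  · exact vanish (not_lt.mp hs)

end Cartan

/-- In the algebra `A_n^m`, for each `u < m` the set
`𝔍_u = span{I r : r ≠ u}` is a maximal ideal. -/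
theorem maximal_ideal {n m : ℕ} (A : Type*) [CommRing A] [Algebra ℂ A]
    (I : Module.Basis (Fin n) ℂ A)
    (h1 : ∀ r s : Fin n, (r : ℕ) < m → (s : ℕ) < m →
      I r * I s = if r = s then I r else 0)
    (h2 : ∀ r s : Fin n, m ≤ (r : ℕ) → m ≤ (s : ℕ) →
      I r * I s ∈ Submodule.span ℂ {x : A | ∃ p : Fin n, max r s < p ∧ x = I p})
    (uu : Fin n → Fin n)
    (h3 : ∀ s : Fin n, m ≤ (s : ℕ) → (uu s : ℕ) < m ∧ I (uu s) * I s = I s ∧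
      ∀ r : Fin n, (r : ℕ) < m → r ≠ uu s → I r * I s = 0)
    (hone : (1 : A) = ∑ r ∈ Finset.univ.filter (fun r : Fin n => (r : ℕ) < m), I r)
    (u : Fin n) (hu : (u : ℕ) < m) :
    ∃ J : Ideal A, J.IsMaximal ∧
      (J : Set A) = (Submodule.span ℂ {x : A | ∃ r : Fin n, r ≠ u ∧ x = I r} : Set A) := by
  classical
  have map_one : I.coord u 1 = 1 := by
    simp [hone, Finsupp.single_apply, hu]
  let φ : A →ₐ[ℂ] ℂ := AlgHom.ofLinearMap (I.coord u) map_one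
    (I.map_mul_of_map_mul_basis _ (coord_mul_basis I h1 h2 uu h3 hu))
  refine ⟨RingHom.ker φ,
    RingHom.ker_isMaximal_of_surjective φ fun z => ⟨algebraMap ℂ A z, φ.commutes z⟩, ?_⟩
  ext x
  exact I.coord_eq_zero_iff_mem_span u x
end

section
/- In the algebra A_n^m, the intersection of the m maximal ideals 𝔍_u = span{I_r : r ≠ u} (u = 1,...,m) equals the set ℛ = { Σ_{r=m+1}^n λ_r I_r : λ_r ∈ ℂ }, and every element of ℛ is nilpotent. -/
/-!
An element of `span {I r : r ≠ u}` is one whose `u`-th coordinate vanishes, so the intersection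
over `u < m` consists of the elements with no coordinate below `m`. For nilpotency, the spans
`J t = span {I r : t ≤ r}` form a filtration with `J m * J t ≤ J (t + 1)` for `m ≤ t`, so the
`(k + 1)`-st power of an element of `J m` lies in `J (m + k)`, which is zero once `m + k ≥ n`.
-/

open Submodule

namespace Module.Basis

variable {ι R M : Type*} [Semiring R] [AddCommMonoid M] [Module R M] (b : Basis ι R M)

theorem mem_span_setOf_iff_repr_eq_zero (P : ι → Prop) (x : M) :
    x ∈ span R {y : M | ∃ r, P r ∧ y = b r} ↔ ∀ r, ¬ P r → b.repr x r = 0 := by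
  have himage : {y : M | ∃ r, P r ∧ y = b r} = b '' {r | P r} := by
    ext y
    constructor <;> rintro ⟨r, hr, rfl⟩ <;> exact ⟨r, hr, rfl⟩
  rw [himage, mem_span_image]
  refine ⟨fun h r hr => ?_, fun h r hr => ?_⟩
  · by_contra hne
    exact hr (h (Finsupp.mem_support_iff.2 hne))
  · by_contra hne
    exact Finsupp.mem_support_iff.1 hr (h r hne)

theorem biInter_span_ne_eq_span_notMem (s : Set ι) :
    (⋂ u ∈ s, (span R {x : M | ∃ r, r ≠ u ∧ x = b r} : Set M)) =
      span R {x : M | ∃ r, r ∉ s ∧ x = b r} := by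
  ext x
  simp only [Set.mem_iInter, SetLike.mem_coe, mem_span_setOf_iff_repr_eq_zero, not_not]
  exact ⟨fun h r hr => h r hr r rfl, fun h u hu r hr => h r (by rwa [hr])⟩

end Module.Basis

section Filtration

variable {R A : Type*} [CommSemiring R] [Semiring A] [Algebra R A] {n : ℕ}
  (I : Module.Basis (Fin n) R A)

def tailSpan (t : ℕ) : Submodule R A :=
  span R {x : A | ∃ r : Fin n, t ≤ (r : ℕ) ∧ x = I r}

theorem tailSpan_eq_bot {t : ℕ} (ht : n ≤ t) : tailSpan I t = ⊥ := by
  rw [tailSpan, span_eq_bot]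
  rintro _ ⟨r, hr, rfl⟩
  exact absurd r.isLt (by omega)

variable {I} {m : ℕ}
  (hmul : ∀ r s : Fin n, m ≤ (r : ℕ) → m ≤ (s : ℕ) →
    I r * I s ∈ span R {x : A | ∃ p : Fin n, max r s < p ∧ x = I p})
include hmul

theorem tailSpan_mul_le {t : ℕ} (ht : m ≤ t) : tailSpan I m * tailSpan I t ≤ tailSpan I (t + 1) := by
  rw [tailSpan, tailSpan, span_mul_span, span_le]
  rintro _ ⟨_, ⟨r, hr, rfl⟩, _, ⟨s, hs, rfl⟩, rfl⟩
  refine span_mono ?_ (hmul r s hr (ht.trans hs))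
  rintro _ ⟨p, hp, rfl⟩
  exact ⟨p, by have := (le_max_right r s).trans_lt hp; omega, rfl⟩

theorem pow_succ_mem_tailSpan {x : A} (hx : x ∈ tailSpan I m) (k : ℕ) :
    x ^ (k + 1) ∈ tailSpan I (m + k) := by
  induction k with
  | zero => simpa using hx
  | succ k ih =>
    rw [pow_succ']
    exact tailSpan_mul_le hmul (Nat.le_add_right m k) (mul_mem_mul hx ih)

theorem isNilpotent_of_mem_tailSpan {x : A} (hx : x ∈ tailSpan I m) : IsNilpotent x := by
  refine ⟨n - m + 1, ?_⟩
  have hpow := pow_succ_mem_tailSpan hmul hx (n - m)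
  rwa [tailSpan_eq_bot I (by omega), mem_bot] at hpow

end Filtration

theorem radical_eq_inter_general {n m : ℕ} (A : Type*) [CommRing A] [Algebra ℂ A]
    (I : Module.Basis (Fin n) ℂ A)
    (h2 : ∀ r s : Fin n, m ≤ (r : ℕ) → m ≤ (s : ℕ) →
      I r * I s ∈ Submodule.span ℂ {x : A | ∃ p : Fin n, max r s < p ∧ x = I p}) :
    (⋂ u ∈ {u : Fin n | (u : ℕ) < m},
        (Submodule.span ℂ {x : A | ∃ r : Fin n, r ≠ u ∧ x = I r} : Set A)) =
      (Submodule.span ℂ {x : A | ∃ r : Fin n, m ≤ (r : ℕ) ∧ x = I r} : Set A) ∧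
    ∀ x ∈ Submodule.span ℂ {x : A | ∃ r : Fin n, m ≤ (r : ℕ) ∧ x = I r},
      IsNilpotent x := by
  refine ⟨?_, fun x hx => isNilpotent_of_mem_tailSpan h2 hx⟩
  simpa only [Set.mem_ofPred_eq, not_lt] using I.biInter_span_ne_eq_span_notMem {u | (u : ℕ) < m}

/-- The intersection of the `m` maximal ideals
`𝔍_u = span{I r : r ≠ u}` equals the radical `ℛ = span{I r : m ≤ r}`, and
every element of `ℛ` is nilpotent. -/
theorem radical_eq_inter {n m : ℕ} (A : Type*) [CommRing A] [Algebra ℂ A]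
    (I : Module.Basis (Fin n) ℂ A)
    (h1 : ∀ r s : Fin n, (r : ℕ) < m → (s : ℕ) < m →
      I r * I s = if r = s then I r else 0)
    (h2 : ∀ r s : Fin n, m ≤ (r : ℕ) → m ≤ (s : ℕ) →
      I r * I s ∈ Submodule.span ℂ {x : A | ∃ p : Fin n, max r s < p ∧ x = I p})
    (uu : Fin n → Fin n)
    (h3 : ∀ s : Fin n, m ≤ (s : ℕ) → (uu s : ℕ) < m ∧ I (uu s) * I s = I s ∧
      ∀ r : Fin n, (r : ℕ) < m → r ≠ uu s → I r * I s = 0)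
    (hone : (1 : A) = ∑ r ∈ Finset.univ.filter (fun r : Fin n => (r : ℕ) < m), I r) :
    (⋂ u ∈ {u : Fin n | (u : ℕ) < m},
        (Submodule.span ℂ {x : A | ∃ r : Fin n, r ≠ u ∧ x = I r} : Set A)) =
      (Submodule.span ℂ {x : A | ∃ r : Fin n, m ≤ (r : ℕ) ∧ x = I r} : Set A) ∧
    ∀ x ∈ Submodule.span ℂ {x : A | ∃ r : Fin n, m ≤ (r : ℕ) ∧ x = I r},
      IsNilpotent x :=
  radical_eq_inter_general A I h2
end

section
/- Let e_1 = 1 and e_j = Σ_{r=1}^n a_{jr} I_r (j = 2,...,k) in A_n^m, and let ζ = Σ_{j=1}^k x_j e_j with x_j ∈ ℝ. Set ξ_u := f_u(ζ) = x_1 + Σ_{j=2}^k x_j a_{ju}. For any t ∈ ℂ with t ≠ ξ_u for all u = 1,...,m, the element t·e_1 − ζ is invertible and its inverse equals Σ_{u=1}^m (t − ξ_u)^{-1} I_u + Σ_{s=m+1}^n Σ_{r=2}^{s-m+1} Q_{r,s} (t − ξ_{u_s})^{-r} I_s, where Q_{2,s} = T_s := Σ_{j=2}^k x_j a_{js}, B_{q,s}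 := Σ_{p=m+1}^{s-1} T_p Υ^p_{q,s}, and Q_{r,s} = Σ_{q=r+m-2}^{s-1} Q_{r-1,q} B_{q,s} for r ≥ 3. -/
/-!
Split `t·1 - ζ = D - N` with `D = ∑_{u ≤ m} (t - ξ_u) I_u` and `N = ∑_{p > m} T_p I_p`.
Since the `I_u` (`u ≤ m`) are orthogonal idempotents summing to `1`, `D` is invertible with
inverse `E = ∑_u (t - ξ_u)⁻¹ I_u`, and `E` acts on each `I_s` (`s > m`) as the scalar
`(t - ξ_{u_s})⁻¹`. Because `Υ^p_{q,s}` vanishes unless `s > max(q, p)`, the powers of `N` are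
`N^{r-1} = ∑_s Q_{r,s} I_s` with `Q_{r,s} = 0` once `r > s - m + 1`, so `N^{n-m+1} = 0` and
`(D - N)⁻¹ = ∑_{j ≤ n-m} E^{j+1} N^j` is a finite Neumann series.
-/

/-- `B_{q,s} = ∑_{p=m+1}^{s-1} T_p Υ^p_{q,s}` (1-based indices). -/
noncomputable def Bcoef (m : ℕ) (T : ℕ → ℂ) (Υ : ℕ → ℕ → ℕ → ℂ) (q s : ℕ) : ℂ :=
  ∑ p ∈ Finset.Icc (m + 1) (s - 1), T p * Υ q p s

/-- `Q_{2,s} = T_s` and, for `r ≥ 3`, `Q_{r,s} = ∑_{q=r+m-2}^{s-1} Q_{r-1,q} B_{q,s}`. -/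
noncomputable def Qcoef (m : ℕ) (T : ℕ → ℂ) (Υ : ℕ → ℕ → ℕ → ℂ) : ℕ → ℕ → ℂ
  | 0, _ => 0
  | 1, _ => 0
  | 2, s => T s
  | (r + 3), s => ∑ q ∈ Finset.Icc (r + 1 + m) (s - 1),
      Qcoef m T Υ (r + 2) q * Bcoef m T Υ q s

open Finset

section Coefficients

variable {m : ℕ} {T : ℕ → ℂ} {Υ : ℕ → ℕ → ℕ → ℂ}

lemma Bcoef_eq_zero_of_le (hΥ : ∀ q p s : ℕ, s ≤ max q p → Υ q p s = 0) {q s : ℕ}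
    (h : s ≤ q) : Bcoef m T Υ q s = 0 :=
  sum_eq_zero fun p _ => by rw [hΥ q p s (le_max_of_le_left h), mul_zero]

lemma Bcoef_eq_sum_Icc (hΥ : ∀ q p s : ℕ, s ≤ max q p → Υ q p s = 0) {n q s : ℕ}
    (hs : s ≤ n) : Bcoef m T Υ q s = ∑ p ∈ Icc (m + 1) n, T p * Υ q p s := by
  refine sum_subset (Icc_subset_Icc le_rfl (by omega)) fun p hp hnp => ?_
  simp only [mem_Icc] at hp hnp
  rw [hΥ q p s (le_max_of_le_right (by omega)), mul_zero]

lemma Qcoef_eq_zero_of_le {r s : ℕ} (hr : r ≠ 2) (h : s + 2 ≤ m + r) :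
    Qcoef m T Υ r s = 0 := by
  match r, hr with
  | 0, _ => rfl
  | 1, _ => rfl
  | r + 3, _ => rw [Qcoef, Icc_eq_empty (by omega), sum_empty]

lemma Qcoef_succ_eq_sum_Icc (hΥ : ∀ q p s : ℕ, s ≤ max q p → Υ q p s = 0) {n r s : ℕ}
    (hr : 2 ≤ r) (hs : s ≤ n) :
    Qcoef m T Υ (r + 1) s = ∑ q ∈ Icc (m + 1) n, Qcoef m T Υ r q * Bcoef m T Υ q s := by
  obtain ⟨r, rfl⟩ := Nat.exists_eq_add_of_le' hr
  rw [Qcoef]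
  refine sum_subset (fun q hq => by simp only [mem_Icc] at hq ⊢; omega) fun q hq hnq => ?_
  simp only [mem_Icc] at hq hnq
  by_cases hqs : s ≤ q
  · rw [Bcoef_eq_zero_of_le hΥ hqs, mul_zero]
  · rw [Qcoef_eq_zero_of_le (by omega) (by omega), zero_mul]

lemma sum_Icc_Qcoef_div_pow_eq_sum_range {n s : ℕ} (hms : m < s) (hsn : s ≤ n) (c : ℂ) :
    ∑ r ∈ Icc 2 (s - m + 1), Qcoef m T Υ r s / c ^ r =
      ∑ i ∈ range (n - m), Qcoef m T Υ (i + 2) s / c ^ (i + 2) := by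
  rw [range_eq_Ico, sum_Ico_add' (fun r => Qcoef m T Υ r s / c ^ r), zero_add,
    ← Ico_add_one_right_eq_Icc]
  refine sum_subset (Ico_subset_Ico_right (by omega)) fun r hr hnr => ?_
  simp only [mem_Ico] at hr hnr
  rw [Qcoef_eq_zero_of_le (by omega) (by omega), zero_div]

end Coefficients

lemma sum_smul_sum_smul_eq_sum {R M : Type*} [CommSemiring R] [AddCommMonoid M] [Module R M]
    (J S : Finset ℕ) (c : ℕ → R) (a : ℕ → ℕ → R) (I : ℕ → M) :
    ∑ j ∈ J, c j • ∑ r ∈ S, a j r • I r = ∑ r ∈ S, (∑ j ∈ J, c j * a j r) • I r := by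
  simp_rw [smul_sum, smul_smul, sum_smul]
  exact sum_comm

lemma mul_mul_geom_sum_eq_one {R : Type*} [CommRing R] {d e x : R} (hde : d * e = 1) {K : ℕ}
    (hx : x ^ K = 0) : (d - x) * (e * ∑ j ∈ range K, (e * x) ^ j) = 1 := by
  have hfactor : d - x = d * (1 - e * x) := by rw [mul_sub, mul_one, ← mul_assoc, hde, one_mul]
  rw [hfactor, mul_mul_mul_comm, hde, one_mul, mul_neg_geom_sum, mul_pow, hx, mul_zero, sub_zero]

lemma pow_mul_eq_smul {R A : Type*} [CommSemiring R] [Semiring A] [Algebra R A]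
    {x y : A} {c : R} (h : x * y = c • y) (j : ℕ) : x ^ j * y = c ^ j • y := by
  induction j with
  | zero => simp
  | succ j ih => rw [pow_succ, mul_assoc, h, mul_smul_comm, ih, smul_smul, ← pow_succ']

section CartanAlgebra

variable {A : Type*} [CommRing A] [Algebra ℂ A] {I : ℕ → A} {m n : ℕ}
  {Υ : ℕ → ℕ → ℕ → ℂ}

lemma smul_one_sub_eq_sub (hmn : m ≤ n) (hone : (1 : A) = ∑ r ∈ Icc 1 m, I r)
    (t c : ℂ) (T : ℕ → ℂ) :
    t • (1 : A) - (c • 1 + ∑ r ∈ Icc 1 n, T r • I r) =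
      ∑ v ∈ Icc 1 m, (t - (c + T v)) • I v - ∑ p ∈ Icc (m + 1) n, T p • I p := by
  have hsplit := sum_Ioc_consecutive (fun r => T r • I r) (Nat.zero_le m) hmn
  simp only [← Icc_add_one_left_eq_Ioc, zero_add] at hsplit
  rw [← hsplit, hone]
  simp only [smul_sum, sub_smul, add_smul, sum_sub_distrib, sum_add_distrib]
  abel

lemma sum_smul_mul_sum_smul
    (h1 : ∀ r s : ℕ, 1 ≤ r → r ≤ m → 1 ≤ s → s ≤ m →
      I r * I s = if r = s then I r else 0)
    (a b : ℕ → ℂ) :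
    (∑ v ∈ Icc 1 m, a v • I v) * ∑ v ∈ Icc 1 m, b v • I v =
      ∑ v ∈ Icc 1 m, (a v * b v) • I v := by
  rw [sum_mul]
  refine sum_congr rfl fun v hv => ?_
  rw [mul_sum, sum_eq_single_of_mem v hv fun w hw hwv => ?_]
  · rw [mem_Icc] at hv
    rw [smul_mul_smul_comm, h1 v v hv.1 hv.2 hv.1 hv.2, if_pos rfl]
  · rw [mem_Icc] at hv hw
    rw [smul_mul_smul_comm, h1 v w hv.1 hv.2 hw.1 hw.2, if_neg hwv.symm, smul_zero]

lemma sum_smul_mul_eq_smul {w : ℕ} {y : A} (hw : w ∈ Icc 1 m) (hwy : I w * y = y)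
    (hy : ∀ r : ℕ, 1 ≤ r → r ≤ m → r ≠ w → I r * y = 0) (b : ℕ → ℂ) :
    (∑ v ∈ Icc 1 m, b v • I v) * y = b w • y := by
  rw [sum_mul, sum_eq_single_of_mem w hw fun r hr hrw => ?_, smul_mul_assoc, hwy]
  rw [mem_Icc] at hr
  rw [smul_mul_assoc, hy r hr.1 hr.2 hrw, smul_zero]

lemma sum_smul_mul_sum_smul_of_gt
    (h2 : ∀ q p : ℕ, m < q → q ≤ n → m < p → p ≤ n →
      I q * I p = ∑ s ∈ Icc (m + 1) n, Υ q p s • I s)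
    (hΥ : ∀ q p s : ℕ, s ≤ max q p → Υ q p s = 0) (c T : ℕ → ℂ) :
    (∑ q ∈ Icc (m + 1) n, c q • I q) * ∑ p ∈ Icc (m + 1) n, T p • I p =
      ∑ s ∈ Icc (m + 1) n, (∑ q ∈ Icc (m + 1) n, c q * Bcoef m T Υ q s) • I s := by
  have hterm : ∀ q ∈ Icc (m + 1) n, ∀ p ∈ Icc (m + 1) n, (c q • I q) * (T p • I p) =
      ∑ s ∈ Icc (m + 1) n, (c q * (T p * Υ q p s)) • I s := by
    intro q hq p hp
    rw [mem_Icc] at hq hp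
    rw [smul_mul_smul_comm, h2 q p (by omega) hq.2 (by omega) hp.2, smul_sum]
    simp only [smul_smul, mul_assoc]
  rw [sum_mul_sum, sum_congr rfl fun q hq => sum_congr rfl (hterm q hq)]
  refine ((sum_congr rfl fun _ _ => sum_comm).trans sum_comm).trans (sum_congr rfl fun s hs => ?_)
  simp_rw [Bcoef_eq_sum_Icc hΥ (mem_Icc.1 hs).2, mul_sum, sum_smul]

lemma sum_smul_pow_succ_of_gt
    (h2 : ∀ q p : ℕ, m < q → q ≤ n → m < p → p ≤ n →
      I q * I p = ∑ s ∈ Icc (m + 1) n, Υ q p s • I s)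
    (hΥ : ∀ q p s : ℕ, s ≤ max q p → Υ q p s = 0) (T : ℕ → ℂ) (j : ℕ) :
    (∑ p ∈ Icc (m + 1) n, T p • I p) ^ (j + 1) =
      ∑ s ∈ Icc (m + 1) n, Qcoef m T Υ (j + 2) s • I s := by
  induction j with
  | zero => rw [zero_add, pow_one]; rfl
  | succ j ih =>
    rw [pow_succ, ih, sum_smul_mul_sum_smul_of_gt h2 hΥ]
    exact sum_congr rfl fun s hs =>
      by rw [Qcoef_succ_eq_sum_Icc hΥ (by omega) (mem_Icc.1 hs).2]

lemma sum_smul_pow_eq_zero_of_gt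
    (h2 : ∀ q p : ℕ, m < q → q ≤ n → m < p → p ≤ n →
      I q * I p = ∑ s ∈ Icc (m + 1) n, Υ q p s • I s)
    (hΥ : ∀ q p s : ℕ, s ≤ max q p → Υ q p s = 0) (T : ℕ → ℂ) :
    (∑ p ∈ Icc (m + 1) n, T p • I p) ^ (n - m + 1) = 0 := by
  rw [sum_smul_pow_succ_of_gt h2 hΥ]
  refine sum_eq_zero fun s hs => ?_
  rw [mem_Icc] at hs
  rw [Qcoef_eq_zero_of_le (by omega) (by omega), zero_smul]

theorem sum_smul_sub_sum_smul_mul_eq_one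
    (h1 : ∀ r s : ℕ, 1 ≤ r → r ≤ m → 1 ≤ s → s ≤ m →
      I r * I s = if r = s then I r else 0)
    (h2 : ∀ q p : ℕ, m < q → q ≤ n → m < p → p ≤ n →
      I q * I p = ∑ s ∈ Icc (m + 1) n, Υ q p s • I s)
    (hΥ : ∀ q p s : ℕ, s ≤ max q p → Υ q p s = 0) (u : ℕ → ℕ)
    (h3 : ∀ s : ℕ, m < s → s ≤ n → (1 ≤ u s ∧ u s ≤ m ∧ I (u s) * I s = I s ∧
      ∀ r : ℕ, 1 ≤ r → r ≤ m → r ≠ u s → I r * I s = 0))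
    (hone : (1 : A) = ∑ r ∈ Icc 1 m, I r) (τ T : ℕ → ℂ)
    (hτ : ∀ v : ℕ, 1 ≤ v → v ≤ m → τ v ≠ 0) :
    (∑ v ∈ Icc 1 m, τ v • I v - ∑ p ∈ Icc (m + 1) n, T p • I p) *
      (∑ v ∈ Icc 1 m, (τ v)⁻¹ • I v +
        ∑ s ∈ Icc (m + 1) n, (∑ r ∈ Icc 2 (s - m + 1), Qcoef m T Υ r s / τ (u s) ^ r) • I s)
      = 1 := by
  set E := ∑ v ∈ Icc 1 m, (τ v)⁻¹ • I v
  set N := ∑ p ∈ Icc (m + 1) n, T p • I p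
  have hDE : (∑ v ∈ Icc 1 m, τ v • I v) * E = 1 := by
    rw [sum_smul_mul_sum_smul h1, hone]
    refine sum_congr rfl fun v hv => ?_
    rw [mem_Icc] at hv
    rw [mul_inv_cancel₀ (hτ v hv.1 hv.2), one_smul]
  have hEpow : ∀ j, ∀ s ∈ Icc (m + 1) n, E ^ j * I s = (τ (u s))⁻¹ ^ j • I s := by
    intro j s hs
    rw [mem_Icc] at hs
    obtain ⟨hu1, hum, hus, hr⟩ := h3 s (by omega) hs.2
    exact pow_mul_eq_smul (sum_smul_mul_eq_smul (mem_Icc.2 ⟨hu1, hum⟩) hus hr _) j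
  have hterm : ∀ i, E * (E * N) ^ (i + 1) =
      ∑ s ∈ Icc (m + 1) n, (Qcoef m T Υ (i + 2) s / τ (u s) ^ (i + 2)) • I s := by
    intro i
    rw [mul_pow, ← mul_assoc, ← pow_succ', sum_smul_pow_succ_of_gt h2 hΥ, mul_sum]
    refine sum_congr rfl fun s hs => ?_
    rw [mul_smul_comm, hEpow _ s hs, smul_smul, div_eq_mul_inv, inv_pow]
  convert mul_mul_geom_sum_eq_one hDE (sum_smul_pow_eq_zero_of_gt h2 hΥ T) using 2
  rw [mul_sum, sum_range_succ', pow_zero, mul_one, add_comm,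
    sum_congr rfl fun i _ => hterm i, sum_comm]
  congr 1
  refine sum_congr rfl fun s hs => ?_
  rw [mem_Icc] at hs
  rw [← sum_smul, sum_Icc_Qcoef_div_pow_eq_sum_range (by omega) hs.2]

end CartanAlgebra

theorem resolvent_expansion_general {n m k : ℕ} (hmn : m ≤ n)
    (A : Type*) [CommRing A] [Algebra ℂ A] (I : ℕ → A)
    (h1 : ∀ r s : ℕ, 1 ≤ r → r ≤ m → 1 ≤ s → s ≤ m →
      I r * I s = if r = s then I r else 0)
    (Υ : ℕ → ℕ → ℕ → ℂ)
    (h2 : ∀ q p : ℕ, m < q → q ≤ n → m < p → p ≤ n →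
      I q * I p = ∑ s ∈ Finset.Icc (m + 1) n, Υ q p s • I s)
    (hΥ : ∀ q p s : ℕ, s ≤ max q p → Υ q p s = 0)
    (u : ℕ → ℕ)
    (h3 : ∀ s : ℕ, m < s → s ≤ n → (1 ≤ u s ∧ u s ≤ m ∧ I (u s) * I s = I s ∧
      ∀ r : ℕ, 1 ≤ r → r ≤ m → r ≠ u s → I r * I s = 0))
    (hone : (1 : A) = ∑ r ∈ Finset.Icc 1 m, I r)
    (a : ℕ → ℕ → ℂ) (x : ℕ → ℝ) :
    ∀ t : ℂ, (∀ v : ℕ, 1 ≤ v → v ≤ m →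
        t ≠ (x 1 : ℂ) + ∑ j ∈ Finset.Icc 2 k, (x j : ℂ) * a j v) →
      IsUnit (t • (1 : A) -
        ((x 1 : ℂ) • (1 : A) +
          ∑ j ∈ Finset.Icc 2 k, (x j : ℂ) • ∑ r ∈ Finset.Icc 1 n, a j r • I r)) ∧
      (t • (1 : A) -
        ((x 1 : ℂ) • (1 : A) +
          ∑ j ∈ Finset.Icc 2 k, (x j : ℂ) • ∑ r ∈ Finset.Icc 1 n, a j r • I r)) *
        (∑ v ∈ Finset.Icc 1 m,
            (t - ((x 1 : ℂ) + ∑ j ∈ Finset.Icc 2 k, (x j : ℂ) * a j v))⁻¹ • I v +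
          ∑ s ∈ Finset.Icc (m + 1) n,
            (∑ r ∈ Finset.Icc 2 (s - m + 1),
              Qcoef m (fun p => ∑ j ∈ Finset.Icc 2 k, (x j : ℂ) * a j p) Υ r s /
                (t - ((x 1 : ℂ) + ∑ j ∈ Finset.Icc 2 k, (x j : ℂ) * a j (u s))) ^ r) • I s)
        = 1 := by
  intro t ht
  have hmul := sum_smul_sub_sum_smul_mul_eq_one h1 h2 hΥ u h3 hone
    (fun v => t - ((x 1 : ℂ) + ∑ j ∈ Icc 2 k, (x j : ℂ) * a j v))
    (fun p => ∑ j ∈ Icc 2 k, (x j : ℂ) * a j p)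
    fun v hv1 hvm => sub_ne_zero.2 (ht v hv1 hvm)
  rw [sum_smul_sum_smul_eq_sum, smul_one_sub_eq_sub hmn hone]
  exact ⟨IsUnit.of_mul_eq_one _ hmul, hmul⟩

/-- Lemma 1: expansion of the resolvent `(t e_1 - ζ)⁻¹` in `A_n^m`,
where `ζ = ∑_{j=1}^k x_j e_j`, `e_1 = 1`, `e_j = ∑_r a_{jr} I_r`,
`ξ_u = x_1 + ∑_{j=2}^k x_j a_{ju}` and `T_s = ∑_{j=2}^k x_j a_{js}`. -/
theorem resolvent_expansion {n m k : ℕ} (hm : 1 ≤ m) (hmn : m ≤ n) (hk : 2 ≤ k)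
    (A : Type*) [CommRing A] [Algebra ℂ A] (I : ℕ → A)
    (h1 : ∀ r s : ℕ, 1 ≤ r → r ≤ m → 1 ≤ s → s ≤ m →
      I r * I s = if r = s then I r else 0)
    (Υ : ℕ → ℕ → ℕ → ℂ)
    (h2 : ∀ q p : ℕ, m < q → q ≤ n → m < p → p ≤ n →
      I q * I p = ∑ s ∈ Finset.Icc (m + 1) n, Υ q p s • I s)
    (hΥ : ∀ q p s : ℕ, s ≤ max q p → Υ q p s = 0)
    (u : ℕ → ℕ)
    (h3 : ∀ s : ℕ, m < s → s ≤ n → (1 ≤ u s ∧ u s ≤ m ∧ I (u s) * I s = I s ∧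
      ∀ r : ℕ, 1 ≤ r → r ≤ m → r ≠ u s → I r * I s = 0))
    (hone : (1 : A) = ∑ r ∈ Finset.Icc 1 m, I r)
    (a : ℕ → ℕ → ℂ) (x : ℕ → ℝ) :
    ∀ t : ℂ, (∀ v : ℕ, 1 ≤ v → v ≤ m →
        t ≠ (x 1 : ℂ) + ∑ j ∈ Finset.Icc 2 k, (x j : ℂ) * a j v) →
      IsUnit (t • (1 : A) -
        ((x 1 : ℂ) • (1 : A) +
          ∑ j ∈ Finset.Icc 2 k, (x j : ℂ) • ∑ r ∈ Finset.Icc 1 n, a j r • I r)) ∧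
      (t • (1 : A) -
        ((x 1 : ℂ) • (1 : A) +
          ∑ j ∈ Finset.Icc 2 k, (x j : ℂ) • ∑ r ∈ Finset.Icc 1 n, a j r • I r)) *
        (∑ v ∈ Finset.Icc 1 m,
            (t - ((x 1 : ℂ) + ∑ j ∈ Finset.Icc 2 k, (x j : ℂ) * a j v))⁻¹ • I v +
          ∑ s ∈ Finset.Icc (m + 1) n,
            (∑ r ∈ Finset.Icc 2 (s - m + 1),
              Qcoef m (fun p => ∑ j ∈ Finset.Icc 2 k, (x j : ℂ) * a j p) Υ r s /
                (t - ((x 1 : ℂ) + ∑ j ∈ Finset.Icc 2 k, (x j : ℂ) * a j (u s))) ^ r) • I s)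
        = 1 :=
  resolvent_expansion_general hmn A I h1 Υ h2 hΥ u h3 hone a x
end

section
/- Let u ∈ {1,...,m} and suppose Im(a_{ju}) ≠ 0 for some j ∈ {2,...,k}. Suppose V : Ω_ℝ → ℂ is ℝ-differentiable on a domain Ω_ℝ ⊂ ℝ^k and satisfies ∂V/∂x_j = a_{ju} · ∂V/∂x_1 for all j = 2,...,k. Then, writing τ + iη := x_1 + Σ_{j=2}^k x_j a_{ju} (so τ = x_1 + Σ x_j Re a_{ju}, η = Σ x_j Im a_{ju}), V satisfies the Cauchy–Riemann relation ∂V/∂η = i ∂V/∂τ; consequently V is locally a holomorphic function of the complex variable ξ_u = x_1 + Σ_{j=2}^k x_j a_{ju}. -/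
/-!
By the hypothesis on the partial derivatives, the real derivative of `V` at every point of `Ω` is
`c(x) • ξ`, so `V` is constant along segments in the kernel directions of `ξ`, and on `Ω` it
factors as `V = F ∘ ξ`. Since `ξ` hits `1` and a non-real `a_j`, it is onto `ℂ` and has a real
linear right inverse `s`. Near `ξ x`, `F = V ∘ (x + s (· - ξ x))`, whose real derivative is
`c(x) • id`, a complex-linear map; hence `F` is holomorphic.
-/

open Function Filter Topology

section

variable {E G : Type*} [NormedAddCommGroup E] [NormedSpace ℝ E] [NormedAddCommGroup G]
  [NormedSpace ℝ G]

theorem eq_of_hasFDerivAt_apply_sub_eq_zero {f : E → G} {f' : E → E →L[ℝ] G} {p q : E}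
    (hf : ∀ z ∈ segment ℝ p q, HasFDerivAt f (f' z) z)
    (hpq : ∀ z ∈ segment ℝ p q, f' z (q - p) = 0) : f p = f q := by
  have hderiv : ∀ t ∈ Set.Icc (0 : ℝ) 1, HasDerivAt (f ∘ AffineMap.lineMap p q) 0 t := by
    intro t ht
    have hz := lineMap_mem_segment ℝ p q ht
    simpa [hpq _ hz] using (hf _ hz).comp_hasDerivAt t AffineMap.hasDerivAt_lineMap
  have hconst := constant_of_has_deriv_right_zero
    (fun t ht => (hderiv t ht).continuousAt.continuousWithinAt)
    (fun t ht => (hderiv t (Set.Ico_subset_Icc_self ht)).hasDerivWithinAt) 1 (by simp)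
  simpa using hconst.symm

theorem factorsThrough_of_hasFDerivAt_smul {L : E →L[ℝ] ℂ} {Ω : Set E} {V : E → ℂ} {c : E → ℂ}
    (hconv : ∀ p ∈ Ω, ∀ q ∈ Ω, L p = L q → segment ℝ p q ⊆ Ω)
    (hV : ∀ x ∈ Ω, HasFDerivAt V (c x • L) x) :
    FactorsThrough (Ω.domRestrict V) (Ω.domRestrict L) := by
  rintro ⟨p, hp⟩ ⟨q, hq⟩ (hpq : L p = L q)
  have hseg := hconv p hp q hq hpq
  exact eq_of_hasFDerivAt_apply_sub_eq_zero (f := V) (p := p) (q := q)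
    (fun z hz => hV z (hseg hz))
    (fun z _ => by simp [hpq])

theorem hasDerivAt_of_eventually_comp_eq {L : E →L[ℝ] ℂ} {s : ℂ →L[ℝ] E}
    (hs : L.comp s = .id ℝ ℂ) {F : ℂ → ℂ} {V : E → ℂ}
    {c : ℂ} {x : E} (hV : HasFDerivAt V (c • L) x) (hFV : ∀ᶠ y in 𝓝 x, F (L y) = V y) :
    HasDerivAt F c (L x) := by
  have hLs : ∀ z, L (s z) = z := fun z => congr($hs z)
  set g : ℂ → E := fun z => x + s (z - L x)
  have hLg : ∀ z, L (g z) = z := fun z => by simp [g, hLs]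
  have hg : HasFDerivAt g s (L x) := by
    simpa [g] using ((s.hasFDerivAt.comp (L x) ((hasFDerivAt_id _).sub_const (L x))).const_add x)
  have hgx : g (L x) = x := by simp [g]
  have hFg : F =ᶠ[𝓝 (L x)] V ∘ g := by
    have hgt : Tendsto g (𝓝 (L x)) (𝓝 x) := by simpa only [hgx] using hg.continuousAt.tendsto
    filter_upwards [hgt.eventually hFV] with z hz
    rw [comp_apply, ← hz, hLg]
  have hVg : HasFDerivAt (V ∘ g) ((c • L).comp s) (L x) := (hgx ▸ hV).comp (L x) hg
  rw [hasDerivAt_iff_hasFDerivAt]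
  refine (hasFDerivAt_of_restrictScalars ℝ hVg ?_).congr_of_eventuallyEq hFg
  ext1 z
  simp [hLs, mul_comm]

end

section

variable {ι : Type*} [Fintype ι]

noncomputable def xi (a : ι → ℂ) : (ι → ℝ) →L[ℝ] ℂ :=
  LinearMap.toContinuousLinearMap (Fintype.linearCombination ℝ a)

theorem xi_apply (a : ι → ℂ) (x : ι → ℝ) : xi a x = ∑ j, (x j : ℂ) * a j := by
  simp [xi, Fintype.linearCombination_apply, Complex.real_smul]

theorem eq_smul_xi [DecidableEq ι] {a : ι → ℂ} {D : (ι → ℝ) →L[ℝ] ℂ} {c : ℂ}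
    (hD : ∀ j, D (Pi.single j 1) = a j * c) : D = c • xi a := by
  refine ContinuousLinearMap.coe_inj.1 (LinearMap.pi_ext' fun j => LinearMap.ext_ring ?_)
  simp [hD, xi, Fintype.linearCombination_apply_single, mul_comm]

theorem Complex.span_pair_one_eq_top {w : ℂ} (hw : w.im ≠ 0) :
    Submodule.span ℝ {1, w} = ⊤ := by
  refine Submodule.eq_top_iff'.2 fun z => ?_
  have hz : z = (z.re - z.im / w.im * w.re) • (1 : ℂ) + (z.im / w.im) • w := by
    apply Complex.ext <;> simp [hw]
  rw [hz]
  exact Submodule.add_mem _ (Submodule.smul_mem _ _ (Submodule.subset_span (by simp)))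
    (Submodule.smul_mem _ _ (Submodule.subset_span (by simp)))

theorem range_xi_eq_top {a : ι → ℂ} {i j : ι} (hi : a i = 1) (hj : (a j).im ≠ 0) :
    (xi a).range = ⊤ := by
  refine eq_top_mono ?_ (Complex.span_pair_one_eq_top hj)
  change _ ≤ LinearMap.range (Fintype.linearCombination ℝ a)
  rw [Fintype.range_linearCombination]
  exact Submodule.span_mono (Set.insert_subset ⟨i, hi⟩ (Set.singleton_subset_iff.2 ⟨j, rfl⟩))

end

theorem holomorphic_of_CR_general {k : ℕ} [NeZero k] (a : Fin k → ℂ) (ha0 : a 0 = 1)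
    (hnr : ∃ j : Fin k, j ≠ 0 ∧ (a j).im ≠ 0)
    (Ω : Set (Fin k → ℝ)) (hΩo : IsOpen Ω)
    (hconv : ∀ p ∈ Ω, ∀ q ∈ Ω,
      (∑ j, ((q j : ℂ) - (p j : ℂ)) * a j) = 0 → segment ℝ p q ⊆ Ω)
    (V : (Fin k → ℝ) → ℂ) (hV : DifferentiableOn ℝ V Ω)
    (hCR : ∀ x ∈ Ω, ∀ j : Fin k,
      fderiv ℝ V x (Pi.single j 1) = a j * fderiv ℝ V x (Pi.single 0 1)) :
    ∃ F : ℂ → ℂ,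
      DifferentiableOn ℂ F ((fun x : Fin k → ℝ => ∑ j, (x j : ℂ) * a j) '' Ω) ∧
      ∀ x ∈ Ω, V x = F (∑ j, (x j : ℂ) * a j) := by
  obtain ⟨j, -, hj⟩ := hnr
  have hξ : (fun x : Fin k → ℝ => ∑ j, (x j : ℂ) * a j) = xi a :=
    funext fun x => (xi_apply a x).symm
  have hV' : ∀ x ∈ Ω, HasFDerivAt V (fderiv ℝ V x (Pi.single 0 1) • xi a) x := fun x hx => by
    rw [← eq_smul_xi (hCR x hx)]
    exact ((hV x hx).differentiableAt (hΩo.mem_nhds hx)).hasFDerivAt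
  have hfactor : FactorsThrough (Ω.domRestrict V) (Ω.domRestrict (xi a)) :=
    factorsThrough_of_hasFDerivAt_smul (fun p hp q hq hpq => hconv p hp q hq <| by
      simpa [xi_apply, sub_mul, Finset.sum_sub_distrib, sub_eq_zero] using hpq.symm) hV'
  set F := extend (Ω.domRestrict (xi a)) (Ω.domRestrict V) 0
  have hF : ∀ x ∈ Ω, F (xi a x) = V x := fun x hx => hfactor.extend_apply 0 ⟨x, hx⟩
  obtain ⟨s, hs⟩ := (xi a).exists_rightInverse_of_surjective (range_xi_eq_top ha0 hj)
  refine ⟨F, ?_, fun x hx => by rw [← xi_apply, hF x hx]⟩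
  rw [hξ]
  rintro _ ⟨x, hx, rfl⟩
  exact (hasDerivAt_of_eventually_comp_eq hs (hV' x hx)
    (eventually_of_mem (hΩo.mem_nhds hx) hF)).differentiableAt.differentiableWithinAt

/-- Lemma 3: if an ℝ-differentiable `V : Ω_ℝ → ℂ` satisfies
`∂V/∂x_j = a_j ∂V/∂x_1` (with `a_1 = 1` and some `a_j` non-real) on a domain
convex with respect to the kernel directions of `ξ(x) = ∑_j x_j a_j`, then `V`
is a holomorphic function of the complex variable `ξ`. -/
theorem holomorphic_of_CR {k : ℕ} [NeZero k] (a : Fin k → ℂ) (ha0 : a 0 = 1)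
    (hnr : ∃ j : Fin k, j ≠ 0 ∧ (a j).im ≠ 0)
    (Ω : Set (Fin k → ℝ)) (hΩo : IsOpen Ω) (hΩc : IsConnected Ω)
    (hconv : ∀ p ∈ Ω, ∀ q ∈ Ω,
      (∑ j, ((q j : ℂ) - (p j : ℂ)) * a j) = 0 → segment ℝ p q ⊆ Ω)
    (V : (Fin k → ℝ) → ℂ) (hV : DifferentiableOn ℝ V Ω)
    (hCR : ∀ x ∈ Ω, ∀ j : Fin k,
      fderiv ℝ V x (Pi.single j 1) = a j * fderiv ℝ V x (Pi.single 0 1)) :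
    ∃ F : ℂ → ℂ,
      DifferentiableOn ℂ F ((fun x : Fin k → ℝ => ∑ j, (x j : ℂ) * a j) '' Ω) ∧
      ∀ x ∈ Ω, V x = F (∑ j, (x j : ℂ) * a j) :=
  holomorphic_of_CR_general a ha0 hnr Ω hΩo hconv V hV hCR
end

section
/- Let Ω ⊂ E_k be a domain and let Φ : Ω → A_n^m have decomposition Φ(ζ) = Σ_{r=1}^n U_r(x_1,...,x_k) I_r with each U_r ℝ-differentiable on Ω_ℝ. Then Φ is monogenic in Ω (i.e., Gateaux differentiable with derivative Φ'(ζ) ∈ A_n^m in the sense that lim_{ε→0+} (Φ(ζ+εh)−Φ(ζ))/ε = h·Φ'(ζ) for all h ∈ E_k) if and only if the Cauchy–Riemann conditions ∂Φ/∂x_j = (∂Φ/∂x_1)·e_j hold in Ω for all j = 2,...,k. -/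
/-!
Write `T x = ∑ x_j e_j`, so that `Φ ∘ T = G := ∑ U_r I_r` on `Ω`. Since `G` is Fréchet
differentiable, the one-sided Gateaux quotient of `Φ` at `T x` in the direction `T y` tends to
`G'(x) y`. Monogenicity therefore says `G'(x) y = T y · d` for one `d`; both sides are `ℝ`-linear
in `y` and `T δ₁ = e₁ = 1`, so this is equivalent to its instances `y = δ_j`, which are the
Cauchy–Riemann conditions (with `d = ∂Φ/∂x₁`). Continuity of `Φ` on `T '' Ω` is automatic because
an injective linear map out of `ℝ^k` is an embedding.
-/

open Filter Topology

section LinearAlgebra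

variable {ι S A : Type*} [Fintype ι] [DecidableEq ι] [CommSemiring S] [CommSemiring A]
  [Algebra S A]

theorem exists_eq_linearCombination_mul_iff (D : (ι → S) →ₗ[S] A) (e : ι → A) {i₀ : ι}
    (he : e i₀ = 1) :
    (∃ d : A, ∀ y, D y = Fintype.linearCombination S e y * d) ↔
      ∀ j, D (Pi.single j 1) = D (Pi.single i₀ 1) * e j := by
  constructor
  · rintro ⟨d, hd⟩ j
    rw [hd, hd, Fintype.linearCombination_apply_single, Fintype.linearCombination_apply_single,
      one_smul, one_smul, he, one_mul, mul_comm]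
  · intro hD
    have hcomp : D = (LinearMap.mulRight S (D (Pi.single i₀ 1))).comp
        (Fintype.linearCombination S e) :=
      (Pi.basisFun S ι).ext fun j => by simp [hD j, mul_comm]
    exact ⟨D (Pi.single i₀ 1), fun y => DFunLike.congr_fun hcomp y⟩

end LinearAlgebra

section Gateaux

variable {E M F : Type*} [NormedAddCommGroup E] [NormedSpace ℝ E]
  [AddCommGroup M] [Module ℂ M] [NormedAddCommGroup F] [NormedSpace ℂ F]
  {Φ : M → F} {T : E →ₗ[ℝ] M} {G : E → F} {Ω : Set E}

theorem tendsto_gateaux_of_comp_eq {x : E} (hΩ : Ω ∈ 𝓝 x) (hΦG : ∀ x' ∈ Ω, Φ (T x') = G x')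
    {G' : E →L[ℝ] F} (hG : HasFDerivAt G G' x) (y : E) :
    Tendsto (fun ε : ℝ => (ε : ℂ)⁻¹ • (Φ (T x + (ε : ℂ) • T y) - Φ (T x)))
      (𝓝[>] 0) (𝓝 (G' y)) := by
  have hline : ∀ᶠ ε : ℝ in 𝓝[>] 0, x + ε • y ∈ Ω := by
    refine nhdsWithin_le_nhds (Tendsto.eventually_mem ?_ hΩ)
    exact Continuous.tendsto' (f := fun ε : ℝ => x + ε • y) (by fun_prop) 0 x (by simp)
  refine (hG.hasLineDerivAt y).tendsto_slope_zero_right.congr' ?_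
  filter_upwards [hline] with ε hε
  rw [← Complex.ofReal_inv, Complex.coe_smul, Complex.coe_smul, ← map_smul, ← map_add, hΦG _ hε,
    hΦG x (mem_of_mem_nhds hΩ)]

end Gateaux

theorem continuousOn_image_of_comp_eq {E M F : Type*} [TopologicalSpace E] [TopologicalSpace M]
    [TopologicalSpace F] {Φ : M → F} {T : E → M} {G : E → F} {Ω : Set E} (hT : IsInducing T)
    (hG : ContinuousOn G Ω) (hΦG : ∀ x ∈ Ω, Φ (T x) = G x) : ContinuousOn Φ (T '' Ω) :=
  hT.continuousOn_image_iff.mpr (hG.congr hΦG)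

theorem monogenic_iff_CR_general {n k : ℕ} [NeZero k]
    (A : Type*) [NormedCommRing A] [NormedAlgebra ℂ A]
    (I : Module.Basis (Fin n) ℂ A)
    (e : Fin k → A) (he0 : e 0 = 1)
    (hli : ∀ x : Fin k → ℝ, ∑ j, (x j : ℂ) • e j = 0 → x = 0)
    (Ωℝ : Set (Fin k → ℝ)) (hΩo : IsOpen Ωℝ)
    (Φ : A → A) (U : Fin n → (Fin k → ℝ) → ℂ)
    (hU : ∀ x ∈ Ωℝ, Φ (∑ j, (x j : ℂ) • e j) = ∑ r, U r x • I r)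
    (hUdiff : ∀ r : Fin n, DifferentiableOn ℝ (U r) Ωℝ) :
    (ContinuousOn Φ ((fun x : Fin k → ℝ => ∑ j, (x j : ℂ) • e j) '' Ωℝ) ∧
      ∀ ζ ∈ (fun x : Fin k → ℝ => ∑ j, (x j : ℂ) • e j) '' Ωℝ,
        ∃ d : A, ∀ h ∈ {h : A | ∃ x : Fin k → ℝ, h = ∑ j, (x j : ℂ) • e j},
          Tendsto (fun ε : ℝ => ((ε : ℂ))⁻¹ • (Φ (ζ + (ε : ℂ) • h) - Φ ζ))
            (𝓝[>] (0 : ℝ)) (𝓝 (h * d))) ↔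
    (∀ x ∈ Ωℝ, ∀ j : Fin k,
      (∑ r, fderiv ℝ (U r) x (Pi.single j 1) • I r) =
        (∑ r, fderiv ℝ (U r) x (Pi.single 0 1) • I r) * e j) := by
  set T := Fintype.linearCombination ℝ e
  have hT : ∀ x : Fin k → ℝ, ∑ j, (x j : ℂ) • e j = T x := fun x => by
    simp only [T, Fintype.linearCombination_apply, Complex.coe_smul]
  simp only [hT] at hli hU ⊢
  have hTind : IsInducing T :=
    (LinearMap.isClosedEmbedding_of_injective (LinearMap.ker_eq_bot'.mpr hli)).isInducing
  set D : (Fin k → ℝ) → (Fin k → ℝ) →L[ℝ] A := fun x => ∑ r, (fderiv ℝ (U r) x).smulRight (I r)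
  have hD : ∀ x v, D x v = ∑ r, fderiv ℝ (U r) x v • I r := by simp [D]
  have hG : ∀ x ∈ Ωℝ, HasFDerivAt (fun x => ∑ r, U r x • I r) (D x) x := fun x hx =>
    HasFDerivAt.fun_sum fun r _ =>
      ((hUdiff r).differentiableAt (hΩo.mem_nhds hx)).hasFDerivAt.smul_const (I r)
  have hgateaux := fun x hx y => tendsto_gateaux_of_comp_eq (hΩo.mem_nhds hx) hU (hG x hx) y
  simp only [← hD]
  constructor
  · rintro ⟨-, hmono⟩ x hx
    obtain ⟨d, hd⟩ := hmono (T x) ⟨x, hx, rfl⟩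
    refine (exists_eq_linearCombination_mul_iff (D x).toLinearMap e he0).mp ⟨d, fun y => ?_⟩
    exact tendsto_nhds_unique (hgateaux x hx y) (hd _ ⟨y, rfl⟩)
  · intro hCR
    refine ⟨continuousOn_image_of_comp_eq hTind
      (fun x hx => (hG x hx).continuousAt.continuousWithinAt) hU, ?_⟩
    rintro _ ⟨x, hx, rfl⟩
    obtain ⟨d, hd⟩ := (exists_eq_linearCombination_mul_iff (D x).toLinearMap e he0).mpr (hCR x hx)
    refine ⟨d, ?_⟩
    rintro _ ⟨y, rfl⟩
    rw [← hd y]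
    exact hgateaux x hx y

/-- a function `Φ(ζ) = ∑_r U_r(x) I_r` with ℝ-differentiable
components is monogenic in `Ω` (continuous and Gateaux differentiable, with
`lim_{ε→0+} ε⁻¹(Φ(ζ+εh) - Φ(ζ)) = h Φ'(ζ)` for all `h ∈ E_k`) if and only if
the Cauchy–Riemann conditions `∂Φ/∂x_j = (∂Φ/∂x_1) e_j` hold. -/
theorem monogenic_iff_CR {n m k : ℕ} [NeZero k]
    (A : Type*) [NormedCommRing A] [NormedAlgebra ℂ A]
    (I : Module.Basis (Fin n) ℂ A)
    (e : Fin k → A) (he0 : e 0 = 1)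
    (hone : (1 : A) = ∑ r ∈ Finset.univ.filter (fun r : Fin n => (r : ℕ) < m), I r)
    (hli : ∀ x : Fin k → ℝ, ∑ j, (x j : ℂ) • e j = 0 → x = 0)
    (Ωℝ : Set (Fin k → ℝ)) (hΩo : IsOpen Ωℝ) (hΩc : IsConnected Ωℝ)
    (Φ : A → A) (U : Fin n → (Fin k → ℝ) → ℂ)
    (hU : ∀ x ∈ Ωℝ, Φ (∑ j, (x j : ℂ) • e j) = ∑ r, U r x • I r)
    (hUdiff : ∀ r : Fin n, DifferentiableOn ℝ (U r) Ωℝ) :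
    (ContinuousOn Φ ((fun x : Fin k → ℝ => ∑ j, (x j : ℂ) • e j) '' Ωℝ) ∧
      ∀ ζ ∈ (fun x : Fin k → ℝ => ∑ j, (x j : ℂ) • e j) '' Ωℝ,
        ∃ d : A, ∀ h ∈ {h : A | ∃ x : Fin k → ℝ, h = ∑ j, (x j : ℂ) • e j},
          Tendsto (fun ε : ℝ => ((ε : ℂ))⁻¹ • (Φ (ζ + (ε : ℂ) • h) - Φ ζ))
            (𝓝[>] (0 : ℝ)) (𝓝 (h * d))) ↔
    (∀ x ∈ Ωℝ, ∀ j : Fin k,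
      (∑ r, fderiv ℝ (U r) x (Pi.single j 1) • I r) =
        (∑ r, fderiv ℝ (U r) x (Pi.single 0 1) • I r) * e j) :=
  monogenic_iff_CR_general A I e he0 hli Ωℝ hΩo Φ U hU hUdiff
end

section
/- Suppose Ω ⊂ E_k is a domain convex with respect to the set of directions M_u := {ζ ∈ E_k : f_u(ζ) = 0}, f_u(E_k) = ℂ, and Φ : Ω → A_n^m is monogenic in Ω. If ζ_1, ζ_2 ∈ Ω with ζ_2 − ζ_1 ∈ M_u, then Φ(ζ_2) − Φ(ζ_1) lies in the maximal ideal 𝔍_u = span{I_r : r ≠ u}. -/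
/-! Cartan's multiplication rules make the coordinate `f_u = I.coord u` multiplicative: it is the
Kronecker coordinate on the idempotents `I_r`, `r < m`, and vanishes on every product involving a
radical vector. Along the segment `ζ₁ + t (ζ₂ - ζ₁)` the right derivative of `f_u ∘ Φ` is therefore
`f_u ((ζ₂ - ζ₁) Φ') = f_u (ζ₂ - ζ₁) f_u (Φ') = 0`, so `f_u ∘ Φ` is constant on the segment, and
`𝔍_u` is exactly the kernel of `f_u`. -/

open Filter Topology Set

namespace Module.Basis

variable {ι R M : Type*}

theorem map_mul_of_map_mul_apply [CommSemiring R] [Semiring M] [Algebra R M]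
    (b : Basis ι R M) (f : M →ₗ[R] R) (h : ∀ i j, f (b i * b j) = f (b i) * f (b j))
    (x y : M) : f (x * y) = f x * f y := by
  have hB : (LinearMap.mul R M).compr₂ f = (LinearMap.mul R R).compl₁₂ f f :=
    LinearMap.ext_basis b b h
  exact LinearMap.congr_fun₂ hB x y

theorem mem_span_ne_iff_coord_eq_zero [Semiring R] [AddCommMonoid M] [Module R M]
    (b : Basis ι R M) {i : ι} {x : M} :
    x ∈ Submodule.span R {y | ∃ j, j ≠ i ∧ y = b j} ↔ b.coord i x = 0 := by
  have hset : {y | ∃ j, j ≠ i ∧ y = b j} = b '' {i}ᶜ := by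
    ext y; simp [eq_comm]
  rw [hset, b.mem_span_image]
  simp [Set.subset_def, Finsupp.mem_support_iff, not_imp_comm]

end Module.Basis

/-- `I r` with `r < m` are the idempotents and the others span the radical; `uu s` is the index
`u_s` with `I_{u_s} I_s = I_s`. -/
structure IsCartanBasis {n : ℕ} {R A : Type*} [CommRing R] [CommRing A] [Algebra R A]
    (I : Module.Basis (Fin n) R A) (m : ℕ) (uu : Fin n → Fin n) : Prop where
  mul_idempotent : ∀ r s : Fin n, (r : ℕ) < m → (s : ℕ) < m →
    I r * I s = if r = s then I r else 0
  mul_radical : ∀ r s : Fin n, m ≤ (r : ℕ) → m ≤ (s : ℕ) →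
    I r * I s ∈ Submodule.span R {x : A | ∃ p : Fin n, max r s < p ∧ x = I p}
  mul_idempotent_radical : ∀ s : Fin n, m ≤ (s : ℕ) → (uu s : ℕ) < m ∧ I (uu s) * I s = I s ∧
    ∀ r : Fin n, (r : ℕ) < m → r ≠ uu s → I r * I s = 0

namespace IsCartanBasis

variable {n m : ℕ} {R A : Type*} [CommRing R] [CommRing A] [Algebra R A]
  {I : Module.Basis (Fin n) R A} {uu : Fin n → Fin n} {u : Fin n}

theorem coord_mul_of_le (hI : IsCartanBasis I m uu) (hu : (u : ℕ) < m) (r : Fin n) {s : Fin n}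
    (hs : m ≤ (s : ℕ)) : I.coord u (I r * I s) = 0 := by
  have hsu : s ≠ u := by rintro rfl; omega
  rcases lt_or_ge (r : ℕ) m with hr | hr
  · obtain ⟨-, hidem, hann⟩ := hI.mul_idempotent_radical s hs
    rcases eq_or_ne r (uu s) with rfl | hr'
    · simp [hidem, Module.Basis.coord_apply, hsu]
    · simp [hann r hr hr']
  · have hker : Submodule.span R {x : A | ∃ p : Fin n, max r s < p ∧ x = I p} ≤
        LinearMap.ker (I.coord u) := by
      rw [Submodule.span_le]
      rintro x ⟨p, hp, rfl⟩
      have hpu : p ≠ u := by rintro rfl; simp at hp; omega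
      simp [Module.Basis.coord_apply, hpu]
    exact hker (hI.mul_radical r s hr hs)

theorem coord_mul (hI : IsCartanBasis I m uu) (hu : (u : ℕ) < m) (x y : A) :
    I.coord u (x * y) = I.coord u x * I.coord u y := by
  have hle : ∀ r s : Fin n, m ≤ (s : ℕ) →
      I.coord u (I r * I s) = I.coord u (I r) * I.coord u (I s) := by
    intro r s hs
    have hsu : s ≠ u := by rintro rfl; omega
    simp [hI.coord_mul_of_le hu r hs, Module.Basis.coord_apply, hsu]
  refine I.map_mul_of_map_mul_apply _ (fun r s => ?_) x y
  rcases le_or_gt m (s : ℕ) with hs | hs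
  · exact hle r s hs
  rcases le_or_gt m (r : ℕ) with hr | hr
  · rw [mul_comm, hle s r hr, mul_comm]
  rw [hI.mul_idempotent r s hr hs]
  by_cases hrs : r = s
  · subst hrs; by_cases hru : r = u <;> simp [Module.Basis.coord_apply, hru]
  · rcases eq_or_ne r u with rfl | hru
    · simp [Module.Basis.coord_apply, hrs]
    · simp [Module.Basis.coord_apply, hrs, hru]

end IsCartanBasis

section SegmentDerivative

variable {E F : Type*} [AddCommGroup E] [Module ℂ E] [NormedAddCommGroup F] [NormedSpace ℂ F]

theorem hasDerivWithinAt_Ici_comp_line_of_tendsto {Ψ : E → F} {z h : E} {D : F} {t : ℝ}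
    (hΨ : Tendsto (fun ε : ℝ => (ε : ℂ)⁻¹ •
      (Ψ (z + (t : ℂ) • h + (ε : ℂ) • h) - Ψ (z + (t : ℂ) • h))) (𝓝[>] 0) (𝓝 D)) :
    HasDerivWithinAt (fun s : ℝ => Ψ (z + (s : ℂ) • h)) D (Ici t) t := by
  rw [hasDerivWithinAt_iff_tendsto_slope, Ici_sdiff_left, ← add_zero t,
    ← Filter.map_add_left_nhdsGT, tendsto_map'_iff]
  refine hΨ.congr fun ε => ?_
  simp only [Function.comp_def, slope_def_module, add_sub_cancel_left, add_zero,
    Complex.ofReal_add, add_smul, add_assoc]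
  rw [← Complex.ofReal_inv, Complex.coe_smul]

theorem eq_of_tendsto_slope_comp_line_zero {Ψ : E → F} {z h : E}
    (hcont : ContinuousOn (fun s : ℝ => Ψ (z + (s : ℂ) • h)) (Icc 0 1))
    (hderiv : ∀ t ∈ Ico (0 : ℝ) 1, Tendsto (fun ε : ℝ => (ε : ℂ)⁻¹ •
      (Ψ (z + (t : ℂ) • h + (ε : ℂ) • h) - Ψ (z + (t : ℂ) • h))) (𝓝[>] 0) (𝓝 0)) :
    Ψ (z + h) = Ψ z := by
  simpa using constant_of_has_deriv_right_zero hcont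
    (fun t ht => hasDerivWithinAt_Ici_comp_line_of_tendsto (hderiv t ht)) 1
    (right_mem_Icc.2 zero_le_one)

end SegmentDerivative

theorem monogenic_difference_in_ideal_general {n m k : ℕ}
    (A : Type*) [NormedCommRing A] [NormedAlgebra ℂ A]
    (I : Module.Basis (Fin n) ℂ A)
    (h1 : ∀ r s : Fin n, (r : ℕ) < m → (s : ℕ) < m →
      I r * I s = if r = s then I r else 0)
    (h2 : ∀ r s : Fin n, m ≤ (r : ℕ) → m ≤ (s : ℕ) →
      I r * I s ∈ Submodule.span ℂ {x : A | ∃ p : Fin n, max r s < p ∧ x = I p})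
    (uu : Fin n → Fin n)
    (h3 : ∀ s : Fin n, m ≤ (s : ℕ) → (uu s : ℕ) < m ∧ I (uu s) * I s = I s ∧
      ∀ r : Fin n, (r : ℕ) < m → r ≠ uu s → I r * I s = 0)
    (e : Fin k → A)
    (u : Fin n) (hu : (u : ℕ) < m)
    (Ωℝ : Set (Fin k → ℝ))
    (hconv : ∀ ζ₁ ∈ (fun x : Fin k → ℝ => ∑ j, (x j : ℂ) • e j) '' Ωℝ,
      ∀ ζ₂ ∈ (fun x : Fin k → ℝ => ∑ j, (x j : ℂ) • e j) '' Ωℝ,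
        I.coord u (ζ₂ - ζ₁) = 0 → ∀ α ∈ Set.Icc (0 : ℝ) 1,
          ζ₁ + (α : ℂ) • (ζ₂ - ζ₁) ∈
            (fun x : Fin k → ℝ => ∑ j, (x j : ℂ) • e j) '' Ωℝ)
    (Φ : A → A)
    (hΦcont : ContinuousOn Φ ((fun x : Fin k → ℝ => ∑ j, (x j : ℂ) • e j) '' Ωℝ))
    (hΦmono : ∀ ζ ∈ (fun x : Fin k → ℝ => ∑ j, (x j : ℂ) • e j) '' Ωℝ,
      ∃ d : A, ∀ h ∈ {h : A | ∃ x : Fin k → ℝ, h = ∑ j, (x j : ℂ) • e j},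
        Tendsto (fun ε : ℝ => ((ε : ℂ))⁻¹ • (Φ (ζ + (ε : ℂ) • h) - Φ ζ))
          (𝓝[>] (0 : ℝ)) (𝓝 (h * d)))
    (ζ₁ ζ₂ : A)
    (hζ₁ : ζ₁ ∈ (fun x : Fin k → ℝ => ∑ j, (x j : ℂ) • e j) '' Ωℝ)
    (hζ₂ : ζ₂ ∈ (fun x : Fin k → ℝ => ∑ j, (x j : ℂ) • e j) '' Ωℝ)
    (hdiff : (∃ x : Fin k → ℝ, ζ₂ - ζ₁ = ∑ j, (x j : ℂ) • e j) ∧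
      I.coord u (ζ₂ - ζ₁) = 0) :
    Φ ζ₂ - Φ ζ₁ ∈ Submodule.span ℂ {x : A | ∃ r : Fin n, r ≠ u ∧ x = I r} := by
  obtain ⟨hdir, hcoord⟩ := hdiff
  have : FiniteDimensional ℂ A := .of_basis I
  have hf : Continuous (I.coord u) := LinearMap.continuous_of_finiteDimensional _
  have hseg (t : ℝ) (ht : t ∈ Icc 0 1) := hconv ζ₁ hζ₁ ζ₂ hζ₂ hcoord t ht
  have hconst : I.coord u (Φ (ζ₁ + (ζ₂ - ζ₁))) = I.coord u (Φ ζ₁) := by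
    refine eq_of_tendsto_slope_comp_line_zero (Ψ := fun ζ => I.coord u (Φ ζ)) ?_ fun t ht => ?_
    · exact hf.comp_continuousOn <| hΦcont.comp (by fun_prop) hseg
    · obtain ⟨d, hd⟩ := hΦmono _ (hseg t (Ico_subset_Icc_self ht))
      have hzero : I.coord u ((ζ₂ - ζ₁) * d) = 0 := by
        rw [IsCartanBasis.coord_mul ⟨h1, h2, h3⟩ hu, hcoord, zero_mul]
      simpa only [Function.comp_def, map_smul, map_sub, hzero] using
        (hf.tendsto _).comp (hd _ hdir)
  rw [I.mem_span_ne_iff_coord_eq_zero, map_sub, sub_eq_zero]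
  simpa only [add_sub_cancel] using hconst

/-- Lemma 2: if `Ω ⊂ E_k` is a domain convex with respect to the
set of directions `M_u = {ζ ∈ E_k : f_u(ζ) = 0}`, `f_u(E_k) = ℂ`, and `Φ` is
monogenic in `Ω`, then `ζ_2 - ζ_1 ∈ M_u` implies
`Φ(ζ_2) - Φ(ζ_1) ∈ 𝔍_u = span{I r : r ≠ u}`. -/
theorem monogenic_difference_in_ideal {n m k : ℕ} [NeZero k]
    (A : Type*) [NormedCommRing A] [NormedAlgebra ℂ A]
    (I : Module.Basis (Fin n) ℂ A)
    (h1 : ∀ r s : Fin n, (r : ℕ) < m → (s : ℕ) < m →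
      I r * I s = if r = s then I r else 0)
    (h2 : ∀ r s : Fin n, m ≤ (r : ℕ) → m ≤ (s : ℕ) →
      I r * I s ∈ Submodule.span ℂ {x : A | ∃ p : Fin n, max r s < p ∧ x = I p})
    (uu : Fin n → Fin n)
    (h3 : ∀ s : Fin n, m ≤ (s : ℕ) → (uu s : ℕ) < m ∧ I (uu s) * I s = I s ∧
      ∀ r : Fin n, (r : ℕ) < m → r ≠ uu s → I r * I s = 0)
    (hone : (1 : A) = ∑ r ∈ Finset.univ.filter (fun r : Fin n => (r : ℕ) < m), I r)
    (e : Fin k → A) (he0 : e 0 = 1)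
    (hli : ∀ x : Fin k → ℝ, ∑ j, (x j : ℂ) • e j = 0 → x = 0)
    (u : Fin n) (hu : (u : ℕ) < m)
    (hsurj : (I.coord u) '' {h : A | ∃ x : Fin k → ℝ, h = ∑ j, (x j : ℂ) • e j} = Set.univ)
    (Ωℝ : Set (Fin k → ℝ)) (hΩo : IsOpen Ωℝ) (hΩc : IsConnected Ωℝ)
    (hconv : ∀ ζ₁ ∈ (fun x : Fin k → ℝ => ∑ j, (x j : ℂ) • e j) '' Ωℝ,
      ∀ ζ₂ ∈ (fun x : Fin k → ℝ => ∑ j, (x j : ℂ) • e j) '' Ωℝ,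
        I.coord u (ζ₂ - ζ₁) = 0 → ∀ α ∈ Set.Icc (0 : ℝ) 1,
          ζ₁ + (α : ℂ) • (ζ₂ - ζ₁) ∈
            (fun x : Fin k → ℝ => ∑ j, (x j : ℂ) • e j) '' Ωℝ)
    (Φ : A → A)
    (hΦcont : ContinuousOn Φ ((fun x : Fin k → ℝ => ∑ j, (x j : ℂ) • e j) '' Ωℝ))
    (hΦmono : ∀ ζ ∈ (fun x : Fin k → ℝ => ∑ j, (x j : ℂ) • e j) '' Ωℝ,
      ∃ d : A, ∀ h ∈ {h : A | ∃ x : Fin k → ℝ, h = ∑ j, (x j : ℂ) • e j},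
        Tendsto (fun ε : ℝ => ((ε : ℂ))⁻¹ • (Φ (ζ + (ε : ℂ) • h) - Φ ζ))
          (𝓝[>] (0 : ℝ)) (𝓝 (h * d)))
    (ζ₁ ζ₂ : A)
    (hζ₁ : ζ₁ ∈ (fun x : Fin k → ℝ => ∑ j, (x j : ℂ) • e j) '' Ωℝ)
    (hζ₂ : ζ₂ ∈ (fun x : Fin k → ℝ => ∑ j, (x j : ℂ) • e j) '' Ωℝ)
    (hdiff : (∃ x : Fin k → ℝ, ζ₂ - ζ₁ = ∑ j, (x j : ℂ) • e j) ∧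
      I.coord u (ζ₂ - ζ₁) = 0) :
    Φ ζ₂ - Φ ζ₁ ∈ Submodule.span ℂ {x : A | ∃ r : Fin n, r ≠ u ∧ x = I r} :=
  monogenic_difference_in_ideal_general A I h1 h2 uu h3 e u hu Ωℝ hconv Φ hΦcont hΦmono ζ₁ ζ₂ hζ₁
    hζ₂ hdiff
end

section
/- Let Φ : Ω → A_n^m be N-times Gateaux differentiable in a domain Ω ⊂ E_k. Then for any multi-index (α_1,...,α_k) with α_1+...+α_k = N, the partial derivative ∂^N Φ / ∂x_1^{α_1}...∂x_k^{α_k} equals e_2^{α_2} e_3^{α_3} ⋯ e_k^{α_k} · Φ^{(N)}(ζ). Consequently, for the operator L_N Φ := Σ_{α_1+...+α_k=N} C_α ∂^N Φ/∂x^α with real coefficients C_α, one has L_N Φ(ζ) = Φ^{(N)}(ζ) · Σ_{α_1+...+α_k=N} C_α e_2^{α_2}⋯e_k^{α_k}; hence Φ satisfies L_N Φ = 0 throughout Ω whenever the characteristic equation Σ_{α_1+...+α_k=N} C_α e_2^{α_2}⋯e_k^{α_k} = 0 holds in A_n^m. -/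
open Filter Topology Set

/-!
Along a real direction `v` of `E_k`, the Gateaux hypothesis says that `Φ^{(r)}(ζ)` has one-sided
directional derivative `v · Φ^{(r+1)}(ζ)`. Since the coordinate function is `C^N`, its Fréchet
derivatives exist and must agree with these one-sided limits, so by induction on `r` each
application of `∂/∂x_j` multiplies by `e_j` and raises the order of `Φ` by one. Collecting equal
factors gives `∂^N Φ/∂x^α = e^α Φ^{(N)}(ζ)`, and then `L_N Φ = Φ^{(N)}(ζ) ∑_α C_α e^α`.
-/

theorem Fintype.prod_comp_eq_prod_pow_of_card_fiber {ι κ M : Type*} [Fintype ι] [Fintype κ]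
    [DecidableEq κ] [CommMonoid M] (f : κ → M) (g : ι → κ) (α : κ → ℕ)
    (hα : ∀ j, (Finset.univ.filter fun i => g i = j).card = α j) :
    ∏ i, f (g i) = ∏ j, f j ^ α j := by
  rw [← Finset.prod_fiberwise Finset.univ g]
  refine Finset.prod_congr rfl fun j _ => ?_
  rw [← hα j]
  exact Finset.prod_eq_pow_card fun i hi => by rw [(Finset.mem_filter.mp hi).2]

theorem HasFDerivAt.apply_eq_of_tendsto_nhdsGT {E F : Type*} [NormedAddCommGroup E]
    [NormedSpace ℝ E] [NormedAddCommGroup F] [NormedSpace ℝ F] {g : E → F} {g' : E →L[ℝ] F}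
    {x v : E} {L : F} (hg : HasFDerivAt g g' x)
    (hlim : Tendsto (fun ε : ℝ => ε⁻¹ • (g (x + ε • v) - g x)) (𝓝[>] 0) (𝓝 L)) :
    g' v = L := by
  refine tendsto_nhds_unique ?_ hlim
  refine (hasFDerivWithinAt_univ.mpr hg).lim (l := 𝓝[>] (0 : ℝ)) (c := fun ε => ε⁻¹)
    (d := fun ε => ε • v) ?_ (by simp) ?_
  · exact tendsto_nhdsWithin_of_tendsto_nhds
      ((continuous_id.smul continuous_const).tendsto' 0 0 (zero_smul ℝ v))
  · refine tendsto_nhds_of_eventually_eq ?_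
    filter_upwards [self_mem_nhdsWithin] with ε hε
    rw [smul_smul, inv_mul_cancel₀ (ne_of_gt hε), one_smul]

theorem iteratedFDerivWithin_apply_eq_prod_mul {E A : Type*} [NormedAddCommGroup E]
    [NormedSpace ℝ E] [NormedCommRing A] [NormedAlgebra ℝ A] {F : E → A} {U : Set E}
    (hU : IsOpen U) {N : ℕ} (hF : ContDiffOn ℝ N F U) (a : E → A) (Ψ : ℕ → E → A)
    (hΨ₀ : EqOn (Ψ 0) F U)
    (hΨ : ∀ r < N, ∀ x ∈ U, ∀ v, Tendsto (fun ε : ℝ => ε⁻¹ • (Ψ r (x + ε • v) - Ψ r x))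
      (𝓝[>] 0) (𝓝 (a v * Ψ (r + 1) x)))
    {r : ℕ} (hr : r ≤ N) {x : E} (hx : x ∈ U) (v : Fin r → E) :
    iteratedFDerivWithin ℝ r F U x v = (∏ i, a (v i)) * Ψ r x := by
  induction r generalizing x with
  | zero => simp [hΨ₀ hx]
  | succ r ih =>
    have hrN : r < N := hr
    set c := ∏ i : Fin r, a (v i.succ)
    have hDr : DifferentiableWithinAt ℝ (iteratedFDerivWithin ℝ r F U) U x :=
      hF.differentiableOn_iteratedFDerivWithin (mod_cast hrN) hU.uniqueDiffOn x hx
    have hEq : EqOn (fun y => iteratedFDerivWithin ℝ r F U y (Fin.tail v))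
        (fun y => c * Ψ r y) U :=
      fun y hy => ih hrN.le hy (Fin.tail v)
    have hdiff : DifferentiableAt ℝ (fun y => c * Ψ r y) x :=
      ((hDr.continuousMultilinear_apply_const _).congr hEq.symm (hEq hx).symm).differentiableAt
        (hU.mem_nhds hx)
    have hquot : Tendsto (fun ε : ℝ => ε⁻¹ • (c * Ψ r (x + ε • v 0) - c * Ψ r x)) (𝓝[>] 0)
        (𝓝 (c * (a (v 0) * Ψ (r + 1) x))) := by
      simpa only [← mul_sub, mul_smul_comm] using (hΨ r hrN x hx (v 0)).const_mul c
    rw [iteratedFDerivWithin_succ_apply_left,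
      ← fderivWithin_continuousMultilinear_apply_const_apply (hU.uniqueDiffOn x hx) hDr,
      fderivWithin_congr' hEq hx, fderivWithin_of_isOpen hU hx,
      hdiff.hasFDerivAt.apply_eq_of_tendsto_nhdsGT hquot, Fin.prod_univ_succ]
    exact (mul_left_comm c _ _).trans (mul_assoc _ _ _).symm

theorem sum_ofReal_smul_add_smul {ι A : Type*} [Fintype ι] [AddCommGroup A] [Module ℂ A]
    (e : ι → A) (x v : ι → ℝ) (ε : ℝ) :
    ∑ j, ((x + ε • v) j : ℂ) • e j = ∑ j, (x j : ℂ) • e j + (ε : ℂ) • ∑ j, (v j : ℂ) • e j := by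
  simp only [Pi.add_apply, Pi.smul_apply, smul_eq_mul, Complex.ofReal_add, Complex.ofReal_mul,
    add_smul, mul_smul, Finset.sum_add_distrib, Finset.smul_sum]

theorem sum_ofReal_single_smul {ι A : Type*} [Fintype ι] [DecidableEq ι] [AddCommGroup A]
    [Module ℂ A] (e : ι → A) (j : ι) :
    ∑ m, ((Pi.single j (1 : ℝ) : ι → ℝ) m : ℂ) • e m = e j := by
  simp [Pi.single_apply]

theorem mixed_partials_and_characteristic_general {k N : ℕ}
    (A : Type*) [NormedCommRing A] [NormedAlgebra ℂ A]
    (e : Fin k → A)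
    (Ωℝ : Set (Fin k → ℝ)) (hΩo : IsOpen Ωℝ)
    (Φ : A → A) (Φs : ℕ → A → A) (hΦ0 : Φs 0 = Φ)
    (hGateaux : ∀ r < N, ∀ ζ ∈ (fun x : Fin k → ℝ => ∑ j, (x j : ℂ) • e j) '' Ωℝ,
      ∀ h ∈ {h : A | ∃ x : Fin k → ℝ, h = ∑ j, (x j : ℂ) • e j},
        Tendsto (fun ε : ℝ => ((ε : ℂ))⁻¹ • (Φs r (ζ + (ε : ℂ) • h) - Φs r ζ))
          (𝓝[>] (0 : ℝ)) (𝓝 (h * Φs (r + 1) ζ)))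
    (hsmooth : ContDiffOn ℝ N (fun x : Fin k → ℝ => Φ (∑ j, (x j : ℂ) • e j)) Ωℝ) :
    (∀ x ∈ Ωℝ, ∀ α ∈ Finset.Nat.antidiagonalTuple k N, ∀ dir : Fin N → Fin k,
      (∀ j : Fin k, (Finset.univ.filter (fun i : Fin N => dir i = j)).card = α j) →
        iteratedFDerivWithin ℝ N
            (fun x : Fin k → ℝ => Φ (∑ j, (x j : ℂ) • e j)) Ωℝ x
            (fun i : Fin N => Pi.single (dir i) 1) =
          (∏ j : Fin k, e j ^ α j) * Φs N (∑ j, (x j : ℂ) • e j)) ∧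
    (∀ C : (Fin k → ℕ) → ℝ,
      (∑ α ∈ Finset.Nat.antidiagonalTuple k N, (C α : ℂ) • ∏ j : Fin k, e j ^ α j)
        = 0 →
      ∀ x ∈ Ωℝ, ∀ dir : (Fin k → ℕ) → Fin N → Fin k,
        (∀ α ∈ Finset.Nat.antidiagonalTuple k N, ∀ j : Fin k,
          (Finset.univ.filter (fun i : Fin N => dir α i = j)).card = α j) →
        ∑ α ∈ Finset.Nat.antidiagonalTuple k N,
          C α • iteratedFDerivWithin ℝ N
            (fun x : Fin k → ℝ => Φ (∑ j, (x j : ℂ) • e j)) Ωℝ x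
            (fun i : Fin N => Pi.single (dir α i) 1) = 0) := by
  set ζ : (Fin k → ℝ) → A := fun x => ∑ j, (x j : ℂ) • e j
  have hquot : ∀ r < N, ∀ x ∈ Ωℝ, ∀ v, Tendsto
      (fun ε : ℝ => ε⁻¹ • (Φs r (ζ (x + ε • v)) - Φs r (ζ x))) (𝓝[>] 0)
      (𝓝 (ζ v * Φs (r + 1) (ζ x))) := fun r hr x hx v => by
    refine (hGateaux r hr (ζ x) ⟨x, hx, rfl⟩ (ζ v) ⟨v, rfl⟩).congr fun ε => ?_
    simp only [ζ]
    rw [sum_ofReal_smul_add_smul, ← Complex.ofReal_inv, Complex.coe_smul]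
  have hpartial : ∀ x ∈ Ωℝ, ∀ (α : Fin k → ℕ) (dir : Fin N → Fin k),
      (∀ j, (Finset.univ.filter (fun i => dir i = j)).card = α j) →
      iteratedFDerivWithin ℝ N (fun x => Φ (ζ x)) Ωℝ x (fun i => Pi.single (dir i) 1) =
        (∏ j, e j ^ α j) * Φs N (ζ x) := fun x hx α dir hdir => by
    rw [iteratedFDerivWithin_apply_eq_prod_mul hΩo hsmooth ζ (fun r y => Φs r (ζ y))
      (fun y _ => by rw [hΦ0]) hquot le_rfl hx]
    simp only [ζ, sum_ofReal_single_smul]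
    rw [Fintype.prod_comp_eq_prod_pow_of_card_fiber e dir α hdir]
  refine ⟨fun x hx α _ dir hdir => hpartial x hx α dir hdir, fun C hchar x hx dir hdir => ?_⟩
  calc ∑ α ∈ Finset.Nat.antidiagonalTuple k N, C α •
        iteratedFDerivWithin ℝ N (fun x => Φ (ζ x)) Ωℝ x (fun i => Pi.single (dir α i) 1)
      = ∑ α ∈ Finset.Nat.antidiagonalTuple k N,
          ((C α : ℂ) • ∏ j, e j ^ α j) * Φs N (ζ x) :=
        Finset.sum_congr rfl fun α hα => by
          rw [hpartial x hx α (dir α) (hdir α hα), Complex.coe_smul, smul_mul_assoc]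
    _ = 0 := by rw [← Finset.sum_mul, hchar, zero_mul]

/-- if `Φ` is `N` times Gateaux differentiable on `Ω ⊂ E_k`, then
for a multi-index `α` with `|α| = N`, the mixed partial
`∂^N Φ/∂x^α` equals `e_1^{α_1} ⋯ e_k^{α_k} Φ^{(N)}(ζ)`; consequently, for real
coefficients `C_α`, `L_N Φ = Φ^{(N)}(ζ) ∑_α C_α e^α`, so `Φ` satisfies
`L_N Φ = 0` whenever the characteristic equation `∑_α C_α e^α = 0` holds. -/
theorem mixed_partials_and_characteristic {n k N : ℕ} [NeZero k]
    (A : Type*) [NormedCommRing A] [NormedAlgebra ℂ A]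
    (e : Fin k → A) (he0 : e 0 = 1)
    (hli : ∀ x : Fin k → ℝ, ∑ j, (x j : ℂ) • e j = 0 → x = 0)
    (Ωℝ : Set (Fin k → ℝ)) (hΩo : IsOpen Ωℝ) (hΩc : IsConnected Ωℝ)
    (Φ : A → A) (Φs : ℕ → A → A) (hΦ0 : Φs 0 = Φ)
    (hcont : ∀ r ≤ N, ContinuousOn (Φs r)
      ((fun x : Fin k → ℝ => ∑ j, (x j : ℂ) • e j) '' Ωℝ))
    (hGateaux : ∀ r < N, ∀ ζ ∈ (fun x : Fin k → ℝ => ∑ j, (x j : ℂ) • e j) '' Ωℝ,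
      ∀ h ∈ {h : A | ∃ x : Fin k → ℝ, h = ∑ j, (x j : ℂ) • e j},
        Tendsto (fun ε : ℝ => ((ε : ℂ))⁻¹ • (Φs r (ζ + (ε : ℂ) • h) - Φs r ζ))
          (𝓝[>] (0 : ℝ)) (𝓝 (h * Φs (r + 1) ζ)))
    (hsmooth : ContDiffOn ℝ N (fun x : Fin k → ℝ => Φ (∑ j, (x j : ℂ) • e j)) Ωℝ) :
    (∀ x ∈ Ωℝ, ∀ α ∈ Finset.Nat.antidiagonalTuple k N, ∀ dir : Fin N → Fin k,
      (∀ j : Fin k, (Finset.univ.filter (fun i : Fin N => dir i = j)).card = α j) →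
        iteratedFDerivWithin ℝ N
            (fun x : Fin k → ℝ => Φ (∑ j, (x j : ℂ) • e j)) Ωℝ x
            (fun i : Fin N => Pi.single (dir i) 1) =
          (∏ j : Fin k, e j ^ α j) * Φs N (∑ j, (x j : ℂ) • e j)) ∧
    (∀ C : (Fin k → ℕ) → ℝ,
      (∑ α ∈ Finset.Nat.antidiagonalTuple k N, (C α : ℂ) • ∏ j : Fin k, e j ^ α j)
        = 0 →
      ∀ x ∈ Ωℝ, ∀ dir : (Fin k → ℕ) → Fin N → Fin k,
        (∀ α ∈ Finset.Nat.antidiagonalTuple k N, ∀ j : Fin k,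
          (Finset.univ.filter (fun i : Fin N => dir α i = j)).card = α j) →
        ∑ α ∈ Finset.Nat.antidiagonalTuple k N,
          C α • iteratedFDerivWithin ℝ N
            (fun x : Fin k → ℝ => Φ (∑ j, (x j : ℂ) • e j)) Ωℝ x
            (fun i : Fin N => Pi.single (dir α i) 1) = 0) :=
  mixed_partials_and_characteristic_general A e Ωℝ hΩo Φ Φs hΦ0 hGateaux hsmooth
end
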